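/- Let X_1, …, X_n be independent random variables taking values in [0,1], let X = Σ_{i=1}^n X_i and μ = E[X] > 0. For any δ > 0, setting k = ⌈μδ⌉ and q = μ(1+δ), one has Pr(X ≥ q) ≤ E[S_k(X_1, …, X_n)] / C(q, k) ≤ G(μ, δ). -/

import Mathlib

open MeasureTheory ProbabilityTheory

/-- The elementary symmetric polynomial `S_k(x_1, …, x_n)`. In particular `S_0 = 1`. -/
noncomputable def symS (n k : ℕ) (x : Fin n → ℝ) : ℝ :=
  ∑ T ∈ Finset.univ.powersetCard k, ∏ i ∈ T, x i

/-- The generalized binomial coefficient `C(x, r) = x(x−1)⋯(x−r+1)/r!` for real `x`. -/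
noncomputable def genChoose (x : ℝ) (r : ℕ) : ℝ :=
  (∏ i ∈ Finset.range r, (x - i)) / (Nat.factorial r : ℝ)

/-- The Chernoff–Hoeffding bound function `G(μ, δ) = (e^δ / (1+δ)^(1+δ))^μ`. -/
noncomputable def chernoffG (μ δ : ℝ) : ℝ :=
  (Real.exp δ / (1 + δ) ^ (1 + δ)) ^ μ

/-!
On the event `q ≤ X` we have `C(q, k) ≤ C(X, k) ≤ S_k(X_1, …, X_n)`, the second inequality
because every `X_i ≤ 1`; Markov's inequality for `S_k(X) ≥ 0` gives the first bound.
By independence `E[S_k(X)] = S_k(p)` with `p_i = E[X_i]`, and `k! S_k(p) ≤ (∑ p_i)^k = μ^k`, so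
the middle term is at most `μ^k / ∏_{i<k} (q - i)`. Finally `∑_{i<k} log ((q - i) / μ)` is a
Riemann sum dominating `μ ∫₁^{1+δ} log = μ ((1+δ) log (1+δ) - δ)`: the choice `k = ⌈μδ⌉` makes
its nodes `(q - i) / μ`, spaced `1 / μ` apart, end within `1 / μ` above `1`.
-/

open Finset Real
open scoped Nat

section GeneralizedBinomial

lemma factorial_mul_genChoose (s : ℝ) (k : ℕ) :
    k ! * genChoose s k = ∏ i ∈ range k, (s - i) := by
  rw [genChoose, mul_div_cancel₀ _ (by positivity)]

lemma genChoose_succ (s : ℝ) (k : ℕ) :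
    genChoose s (k + 1) = genChoose s k * (s - k) / (k + 1) := by
  rw [genChoose, genChoose, prod_range_succ, Nat.factorial_succ]
  push_cast
  field_simp

lemma genChoose_pos {q : ℝ} {k : ℕ} (hq : (k : ℝ) - 1 < q) : 0 < genChoose q k := by
  refine div_pos (prod_pos fun i hi => ?_) (by positivity)
  have : (i : ℝ) + 1 ≤ k := by exact_mod_cast mem_range.1 hi
  linarith

lemma genChoose_le_genChoose {q s : ℝ} {k : ℕ} (hq : (k : ℝ) - 1 < q) (hqs : q ≤ s) :
    genChoose q k ≤ genChoose s k := by
  refine div_le_div_of_nonneg_right (prod_le_prod (fun i hi => ?_) fun i _ => by linarith)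
    (by positivity)
  have : (i : ℝ) + 1 ≤ k := by exact_mod_cast mem_range.1 hi
  linarith

end GeneralizedBinomial

section ElementarySymmetric

variable {n : ℕ} (x : Fin n → ℝ)

lemma symS_zero : symS n 0 x = 1 := by
  simp [symS]

lemma symS_nonneg (hx : ∀ i, 0 ≤ x i) (k : ℕ) : 0 ≤ symS n k x :=
  sum_nonneg fun _ _ => prod_nonneg fun i _ => hx i

/-- Double counting of the pairs `(T, j)` with `#T = k` and `j ∉ T`. -/
lemma succ_mul_symS_succ (k : ℕ) :
    (k + 1 : ℝ) * symS n (k + 1) x =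
      ∑ T ∈ univ.powersetCard k, (∑ j ∈ Tᶜ, x j) * ∏ i ∈ T, x i := by
  calc (k + 1 : ℝ) * symS n (k + 1) x
      = ∑ U ∈ univ.powersetCard (k + 1), ∑ j ∈ U, x j * ∏ i ∈ U.erase j, x i := by
        rw [symS, mul_sum]
        refine sum_congr rfl fun U hU => ?_
        rw [sum_congr rfl fun j hj => mul_prod_erase U x hj, sum_const,
          (mem_powersetCard.1 hU).2, nsmul_eq_mul]
        push_cast
        rfl
    _ = ∑ T ∈ univ.powersetCard k, ∑ j ∈ Tᶜ, x j * ∏ i ∈ T, x i := by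
        rw [sum_sigma', sum_sigma']
        refine sum_nbij' (fun p => ⟨p.1.erase p.2, p.2⟩) (fun p => ⟨insert p.2 p.1, p.2⟩)
          ?_ ?_ ?_ ?_ fun _ _ => rfl
        · rintro ⟨U, j⟩ hp
          simp only [mem_sigma, mem_powersetCard, subset_univ, true_and] at hp ⊢
          simp [card_erase_of_mem hp.2, hp.1]
        · rintro ⟨T, j⟩ hp
          simp only [mem_sigma, mem_powersetCard, subset_univ, true_and, mem_compl] at hp ⊢
          simp [card_insert_of_notMem hp.2, hp.1]
        · rintro ⟨U, j⟩ hp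
          simp [insert_erase (mem_sigma.1 hp).2]
        · rintro ⟨T, j⟩ hp
          simp [erase_insert (mem_compl.1 (mem_sigma.1 hp).2)]
    _ = _ := by simp only [sum_mul]

lemma symS_mul_sub_le (hx : ∀ i, x i ∈ Set.Icc (0 : ℝ) 1) (k : ℕ) :
    symS n k x * (∑ i, x i - k) ≤ (k + 1) * symS n (k + 1) x := by
  rw [succ_mul_symS_succ, symS, sum_mul]
  refine sum_le_sum fun T hT => ?_
  have hT : ∑ i ∈ T, x i ≤ k := by
    simpa [(mem_powersetCard.1 hT).2] using sum_le_sum fun i (_ : i ∈ T) => (hx i).2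
  rw [← sum_compl_add_sum T, mul_comm]
  exact mul_le_mul_of_nonneg_right (by linarith) (prod_nonneg fun i _ => (hx i).1)

lemma succ_mul_symS_succ_le (hx : ∀ i, 0 ≤ x i) (k : ℕ) :
    (k + 1) * symS n (k + 1) x ≤ symS n k x * ∑ i, x i := by
  rw [succ_mul_symS_succ, symS, sum_mul]
  refine sum_le_sum fun T _ => ?_
  rw [mul_comm]
  refine mul_le_mul_of_nonneg_left ?_ (prod_nonneg fun i _ => hx i)
  exact sum_le_sum_of_subset_of_nonneg (subset_univ _) fun i _ _ => hx i

lemma factorial_mul_symS_le_pow (hx : ∀ i, 0 ≤ x i) (k : ℕ) :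
    k ! * symS n k x ≤ (∑ i, x i) ^ k := by
  induction k with
  | zero => simp [symS_zero]
  | succ k ih =>
    have hs : 0 ≤ ∑ i, x i := sum_nonneg fun i _ => hx i
    calc ((k + 1)! : ℝ) * symS n (k + 1) x = k ! * ((k + 1) * symS n (k + 1) x) := by
          push_cast [Nat.factorial_succ]; ring
      _ ≤ k ! * (symS n k x * ∑ i, x i) :=
          mul_le_mul_of_nonneg_left (succ_mul_symS_succ_le x hx k) (by positivity)
      _ = (k ! * symS n k x) * ∑ i, x i := by ring
      _ ≤ (∑ i, x i) ^ k * ∑ i, x i := by gcongr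
      _ = (∑ i, x i) ^ (k + 1) := by ring

lemma genChoose_sum_le_symS (hx : ∀ i, x i ∈ Set.Icc (0 : ℝ) 1) :
    ∀ {k : ℕ}, (k : ℝ) - 1 ≤ ∑ i, x i → genChoose (∑ i, x i) k ≤ symS n k x
  | 0, _ => by simp [genChoose, symS_zero]
  | k + 1, hk => by
    push_cast at hk
    rw [genChoose_succ, div_le_iff₀ (by positivity), mul_comm _ (k + 1 : ℝ)]
    calc genChoose (∑ i, x i) k * (∑ i, x i - k)
        ≤ symS n k x * (∑ i, x i - k) :=
          mul_le_mul_of_nonneg_right (genChoose_sum_le_symS hx (by linarith)) (by linarith)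
      _ ≤ (k + 1) * symS n (k + 1) x := symS_mul_sub_le x hx k

end ElementarySymmetric

section ChernoffExponent

/-- The tangent-line inequality for the convex function `y ↦ y log y - y`, whose derivative is
`log`. -/
lemma mul_log_sub_sub_le {y z : ℝ} (hy : 0 < y) (hz : 0 < z) :
    (y * log y - y) - (z * log z - z) ≤ (y - z) * log y := by
  have h := mul_le_mul_of_nonneg_left (log_le_sub_one_of_pos (div_pos hy hz)) hz.le
  rw [log_div hy.ne' hz.ne', mul_sub_one, mul_div_cancel₀ _ hz.ne'] at h
  nlinarith

/-- A right Riemann-sum bound for `∫₁ʸ log`, with step `h` and a last, shorter step. -/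
lemma mul_log_sub_add_one_le_sum_log {h : ℝ} (hh : 0 < h) :
    ∀ (m : ℕ) {y : ℝ}, 1 ≤ y - m * h → y - m * h ≤ 1 + h →
      y * log y - y + 1 ≤ h * ∑ i ∈ range (m + 1), log (y - i * h)
  | 0, y, hlo, hhi => by
    simp only [CharP.cast_eq_zero, zero_mul, sub_zero] at hlo hhi
    have := mul_log_sub_sub_le (by linarith) one_pos (y := y)
    simp only [log_one, mul_zero] at this
    simp only [zero_add, range_one, sum_singleton, CharP.cast_eq_zero, zero_mul, sub_zero]
    nlinarith [log_nonneg hlo]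
  | m + 1, y, hlo, hhi => by
    push_cast at hlo hhi
    have hstep := mul_log_sub_sub_le (y := y) (z := y - h) (by nlinarith) (by nlinarith)
    rw [sub_sub_cancel] at hstep
    have ih := mul_log_sub_add_one_le_sum_log hh m (y := y - h) (by linarith) (by linarith)
    have hshift : ∀ i : ℕ, y - ((i + 1 : ℕ) : ℝ) * h = y - h - i * h := fun i => by
      push_cast; ring
    rw [sum_range_succ', mul_add]
    simp only [hshift, CharP.cast_eq_zero, zero_mul, sub_zero]
    linarith

lemma chernoffG_eq_exp (μ : ℝ) {δ : ℝ} (hδ : -1 < δ) :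
    chernoffG μ δ = exp (-(μ * ((1 + δ) * log (1 + δ) - δ))) := by
  have hbase : exp δ / (1 + δ) ^ (1 + δ) = exp (δ - (1 + δ) * log (1 + δ)) := by
    rw [rpow_def_of_pos (by linarith), exp_sub, mul_comm]
  rw [chernoffG, hbase, ← exp_mul]
  ring_nf

lemma natCeil_mul_sub_one_lt {μ δ : ℝ} (hμ : 0 < μ) (hδ : 0 < δ) :
    (⌈μ * δ⌉₊ : ℝ) - 1 < μ * (1 + δ) := by
  have := Nat.ceil_lt_add_one (mul_pos hμ hδ).le
  nlinarith

lemma pow_div_prod_le_chernoffG {μ δ : ℝ} (hμ : 0 < μ) (hδ : 0 < δ) :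
    μ ^ ⌈μ * δ⌉₊ / ∏ i ∈ range ⌈μ * δ⌉₊, (μ * (1 + δ) - i) ≤ chernoffG μ δ := by
  obtain ⟨m, hm⟩ : ∃ m, ⌈μ * δ⌉₊ = m + 1 :=
    Nat.exists_eq_add_one.2 (Nat.ceil_pos.2 (mul_pos hμ hδ))
  have hm_lt : m * μ⁻¹ < δ := by
    have := Nat.ceil_lt_add_one (mul_pos hμ hδ).le
    rw [hm] at this; push_cast at this
    rw [← div_eq_mul_inv, div_lt_iff₀ hμ]; linarith
  have hm_ge : δ ≤ m * μ⁻¹ + μ⁻¹ := by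
    have := Nat.le_ceil (μ * δ)
    rw [hm] at this; push_cast at this
    rw [← add_one_mul, ← div_eq_mul_inv, le_div_iff₀ hμ]; linarith
  have hsum := mul_log_sub_add_one_le_sum_log (inv_pos.2 hμ) m (y := 1 + δ)
    (by linarith) (by linarith)
  have hterm_pos : ∀ i ∈ range (m + 1), 0 < 1 + δ - i * μ⁻¹ := fun i hi => by
    have : (i : ℝ) ≤ m := by exact_mod_cast mem_range_succ_iff.1 hi
    nlinarith [inv_pos.2 hμ]
  have hfactor : ∏ i ∈ range (m + 1), (μ * (1 + δ) - i)
      = μ ^ (m + 1) * ∏ i ∈ range (m + 1), (1 + δ - i * μ⁻¹) := by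
    rw [← card_range (m + 1), ← prod_const, card_range, ← prod_mul_distrib]
    exact prod_congr rfl fun i _ => by field_simp
  rw [hm, hfactor, div_mul_cancel_left₀ (by positivity), ← exp_log (prod_pos hterm_pos),
    ← exp_neg, chernoffG_eq_exp μ (by linarith), exp_le_exp, neg_le_neg_iff,
    log_prod fun i hi => (hterm_pos i hi).ne']
  rw [← le_inv_mul_iff₀ hμ]
  linarith

end ChernoffExponent

lemma symS_div_genChoose_le_chernoffG {n : ℕ} {p : Fin n → ℝ} (hp : ∀ i, 0 ≤ p i)
    {μ δ : ℝ} (hpμ : ∑ i, p i = μ) (hμ : 0 < μ) (hδ : 0 < δ) :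
    symS n ⌈μ * δ⌉₊ p / genChoose (μ * (1 + δ)) ⌈μ * δ⌉₊ ≤ chernoffG μ δ := by
  set k := ⌈μ * δ⌉₊
  have hprod_pos : 0 < ∏ i ∈ range k, (μ * (1 + δ) - i) := by
    rw [← factorial_mul_genChoose]
    exact mul_pos (by positivity) (genChoose_pos (natCeil_mul_sub_one_lt hμ hδ))
  rw [← mul_div_mul_left _ _ (Nat.cast_ne_zero.2 k.factorial_ne_zero), factorial_mul_genChoose]
  calc (k ! : ℝ) * symS n k p / ∏ i ∈ range k, (μ * (1 + δ) - i)
      ≤ μ ^ k / ∏ i ∈ range k, (μ * (1 + δ) - i) := by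
        gcongr; exact hpμ ▸ factorial_mul_symS_le_pow p hp k
    _ ≤ chernoffG μ δ := pow_div_prod_le_chernoffG hμ hδ

section Probability

variable {Ω : Type*} {mΩ : MeasurableSpace Ω} {P : Measure Ω} {n : ℕ} {X : Fin n → Ω → ℝ}

lemma integrable_prod_of_mem_Icc [IsFiniteMeasure P] (mX : ∀ i, Measurable (X i))
    (hX : ∀ i ω, X i ω ∈ Set.Icc (0 : ℝ) 1) (T : Finset (Fin n)) :
    Integrable (fun ω => ∏ i ∈ T, X i ω) P := by
  refine .of_bound (Finset.measurable_prod T fun i _ => mX i).aestronglyMeasurable 1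
    (ae_of_all _ fun ω => ?_)
  rw [Real.norm_of_nonneg (prod_nonneg fun i _ => (hX i ω).1)]
  exact prod_le_one (fun i _ => (hX i ω).1) fun i _ => (hX i ω).2

lemma integrable_symS_of_mem_Icc [IsFiniteMeasure P] (mX : ∀ i, Measurable (X i))
    (hX : ∀ i ω, X i ω ∈ Set.Icc (0 : ℝ) 1) (k : ℕ) :
    Integrable (fun ω => symS n k (X · ω)) P :=
  integrable_finsetSum _ fun T _ => integrable_prod_of_mem_Icc mX hX T

lemma ProbabilityTheory.iIndepFun.integral_finset_prod {ι : Type*} {Y : ι → Ω → ℝ}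
    (hY : iIndepFun Y P) (mY : ∀ i, AEStronglyMeasurable (Y i) P) (T : Finset ι) :
    ∫ ω, ∏ i ∈ T, Y i ω ∂P = ∏ i ∈ T, ∫ ω, Y i ω ∂P := by
  calc ∫ ω, ∏ i ∈ T, Y i ω ∂P = ∫ ω, ∏ i : T, Y i ω ∂P := by
        simp only [fun ω => prod_coe_sort T fun i => Y i ω]
    _ = ∏ i : T, ∫ ω, Y i ω ∂P :=
      (hY.precomp Subtype.val_injective).integral_fun_prod_eq_prod_integral fun i => mY i
    _ = ∏ i ∈ T, ∫ ω, Y i ω ∂P := prod_coe_sort T fun i => ∫ ω, Y i ω ∂P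

lemma ProbabilityTheory.iIndepFun.integral_symS (hXi : iIndepFun X P)
    (mX : ∀ i, Measurable (X i)) (hX : ∀ i ω, X i ω ∈ Set.Icc (0 : ℝ) 1) (k : ℕ) :
    ∫ ω, symS n k (X · ω) ∂P = symS n k fun i => ∫ ω, X i ω ∂P := by
  have := hXi.isProbabilityMeasure
  simp only [symS]
  rw [integral_finsetSum _ fun T _ => integrable_prod_of_mem_Icc mX hX T]
  exact sum_congr rfl fun T _ =>
    hXi.integral_finset_prod (fun i => (mX i).aestronglyMeasurable) T

/-- Markov's inequality for `S_k(X)`, which dominates `C(q, k)` on the event `q ≤ ∑ i, X i`. -/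
lemma measureReal_le_integral_symS_div_genChoose [IsFiniteMeasure P]
    (mX : ∀ i, Measurable (X i)) (hX : ∀ i ω, X i ω ∈ Set.Icc (0 : ℝ) 1)
    {q : ℝ} {k : ℕ} (hkq : (k : ℝ) - 1 < q) :
    P.real {ω | q ≤ ∑ i, X i ω} ≤ (∫ ω, symS n k (X · ω) ∂P) / genChoose q k := by
  have hsub : {ω | q ≤ ∑ i, X i ω} ⊆ {ω | genChoose q k ≤ symS n k (X · ω)} := fun ω hω =>
    (genChoose_le_genChoose hkq hω).trans
      (genChoose_sum_le_symS (X · ω) (hX · ω) (by linarith [show q ≤ ∑ i, X i ω from hω]))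
  rw [le_div_iff₀ (genChoose_pos hkq), mul_comm]
  exact (mul_le_mul_of_nonneg_left (measureReal_mono hsub) (genChoose_pos hkq).le).trans
    (mul_meas_ge_le_integral_of_nonneg (ae_of_all _ fun ω => symS_nonneg _ (hX · ω |>.1) k)
      (integrable_symS_of_mem_Icc mX hX k) _)

end Probability

/-- For independent random variables `X_1, …, X_n ∈ [0,1]` with
`X = Σ X_i`, `μ = E[X] > 0`, and any `δ > 0`, setting `k = ⌈μδ⌉` and `q = μ(1+δ)`, one has
`Pr(X ≥ q) ≤ E[S_k(X_1, …, X_n)] / C(q, k) ≤ G(μ, δ)`. -/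
theorem symmetric_poly_chernoff
    {Ω : Type*} [MeasureSpace Ω] [IsProbabilityMeasure (ℙ : Measure Ω)]
    (n : ℕ) (X : Fin n → Ω → ℝ)
    (hXmeas : ∀ i, Measurable (X i))
    (hXrange : ∀ i ω, X i ω ∈ Set.Icc (0 : ℝ) 1)
    (hindep : iIndepFun X ℙ)
    (μ : ℝ) (hμ : μ = ∫ ω, (∑ i, X i ω) ∂ℙ) (hμpos : 0 < μ)
    (δ : ℝ) (hδ : 0 < δ) (k : ℕ) (hk : k = ⌈μ * δ⌉₊) (q : ℝ) (hq : q = μ * (1 + δ)) :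
    (ℙ {ω | q ≤ ∑ i, X i ω}).toReal ≤
        (∫ ω, symS n k (fun i => X i ω) ∂ℙ) / genChoose q k ∧
      (∫ ω, symS n k (fun i => X i ω) ∂ℙ) / genChoose q k ≤ chernoffG μ δ := by
  subst hk hq
  have hmean : ∑ i, ∫ ω, X i ω = μ := by
    rw [hμ, integral_finsetSum _ fun i _ => by
      simpa using integrable_prod_of_mem_Icc hXmeas hXrange {i}]
  refine ⟨measureReal_le_integral_symS_div_genChoose hXmeas hXrange
    (natCeil_mul_sub_one_lt hμpos hδ), ?_⟩
  rw [hindep.integral_symS hXmeas hXrange]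
  exact symS_div_genChoose_le_chernoffG (fun i => integral_nonneg fun ω => (hXrange i ω).1)
    hmean hμpos hδ
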